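/- Let N ≥ 1 and f_j: ℝ² → ℝ be smooth for 0 ≤ j ≤ N, with f_{−1} := 0 and f_{N+1} := 0, and suppose ∂_x f_{j−1} + ∂_y f_j = 0 holds on ℝ² for all 0 ≤ j ≤ N+1. Then each f_j is a polynomial of total degree at most N in (x,y); equivalently, every partial derivative ∂_x^a ∂_y^b f_j with a + b = N + 1 vanishes identically on ℝ². -/
import Mathlib

noncomputable section

/-- Partial derivative with respect to `x` of a function on `ℝ²`. -/
def pdx (f : ℝ × ℝ → ℝ) : ℝ × ℝ → ℝ := fun q => fderiv ℝ f q (1, 0)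

/-- Partial derivative with respect to `y` of a function on `ℝ²`. -/
def pdy (f : ℝ × ℝ → ℝ) : ℝ × ℝ → ℝ := fun q => fderiv ℝ f q (0, 1)

namespace Stmt4Aux

lemma pd_smooth (g : ℝ × ℝ → ℝ) (hg : ContDiff ℝ (⊤ : ℕ∞) g) (v : ℝ × ℝ) :
    ContDiff ℝ (⊤ : ℕ∞) (fun q => fderiv ℝ g q v) := by
  exact (ContinuousLinearMap.apply ℝ ℝ v).contDiff.comp (hg.fderiv_right (by simp))

lemma pdx_smooth (g : ℝ × ℝ → ℝ) (hg : ContDiff ℝ (⊤ : ℕ∞) g) :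
    ContDiff ℝ (⊤ : ℕ∞) (pdx g) := pd_smooth g hg _

lemma pdy_smooth (g : ℝ × ℝ → ℝ) (hg : ContDiff ℝ (⊤ : ℕ∞) g) :
    ContDiff ℝ (⊤ : ℕ∞) (pdy g) := pd_smooth g hg _

lemma pdy_iter_smooth (b : ℕ) (g : ℝ × ℝ → ℝ) (hg : ContDiff ℝ (⊤ : ℕ∞) g) :
    ContDiff ℝ (⊤ : ℕ∞) (pdy^[b] g) := by
  induction b generalizing g with
  | zero => exact hg
  | succ b ih =>
    rw [Function.iterate_succ_apply]
    exact ih _ (pdy_smooth g hg)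

lemma pd_comm (g : ℝ × ℝ → ℝ) (hg : ContDiff ℝ (⊤ : ℕ∞) g) (v w q : ℝ × ℝ) :
    fderiv ℝ (fun p => fderiv ℝ g p w) q v = fderiv ℝ (fun p => fderiv ℝ g p v) q w := by
  have hdg : Differentiable ℝ g := hg.differentiable (by simp)
  have hfd : ContDiff ℝ (⊤ : ℕ∞) (fderiv ℝ g) := hg.fderiv_right (by simp)
  have hdfd : Differentiable ℝ (fderiv ℝ g) := hfd.differentiable (by simp)
  have key : ∀ u : ℝ × ℝ, fderiv ℝ (fun p => fderiv ℝ g p u) q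
      = (fderiv ℝ (fderiv ℝ g) q).flip u := by
    intro u
    have := fderiv_clm_apply (c := fderiv ℝ g) (u := fun _ => u) (hdfd q)
      (differentiableAt_const u)
    simpa [fderiv_const] using this
  rw [key, key]
  simp only [ContinuousLinearMap.flip_apply]
  exact second_derivative_symmetric (f := g) (fun y => (hdg y).hasFDerivAt)
    ((hdfd q).hasFDerivAt) v w

lemma pdx_pdy_comm (g : ℝ × ℝ → ℝ) (hg : ContDiff ℝ (⊤ : ℕ∞) g) :
    pdx (pdy g) = pdy (pdx g) := by
  funext q
  exact pd_comm g hg _ _ q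

lemma pdx_pdy_iter_comm (b : ℕ) (g : ℝ × ℝ → ℝ) (hg : ContDiff ℝ (⊤ : ℕ∞) g) :
    pdx (pdy^[b] g) = pdy^[b] (pdx g) := by
  induction b generalizing g with
  | zero => rfl
  | succ b ih =>
    rw [Function.iterate_succ_apply', pdx_pdy_comm _ (pdy_iter_smooth b g hg), ih g hg,
      Function.iterate_succ_apply']

lemma pdx_neg (g : ℝ × ℝ → ℝ) : pdx (fun q => -(g q)) = fun q => -(pdx g q) := by
  funext q
  simp [pdx, fderiv_neg]

lemma pdy_neg (g : ℝ × ℝ → ℝ) : pdy (fun q => -(g q)) = fun q => -(pdy g q) := by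
  funext q
  simp [pdy, fderiv_neg]

lemma pdx_iter_neg (a : ℕ) (g : ℝ × ℝ → ℝ) :
    pdx^[a] (fun q => -(g q)) = fun q => -(pdx^[a] g q) := by
  induction a generalizing g with
  | zero => rfl
  | succ a ih => rw [Function.iterate_succ_apply, pdx_neg, ih, Function.iterate_succ_apply]

lemma pdy_iter_neg (b : ℕ) (g : ℝ × ℝ → ℝ) :
    pdy^[b] (fun q => -(g q)) = fun q => -(pdy^[b] g q) := by
  induction b generalizing g with
  | zero => rfl
  | succ b ih => rw [Function.iterate_succ_apply, pdy_neg, ih, Function.iterate_succ_apply]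

lemma pdx_zero : pdx (fun _ => (0 : ℝ)) = fun _ => 0 := by
  funext q; simp [pdx, fderiv_const]

lemma pdy_zero : pdy (fun _ => (0 : ℝ)) = fun _ => 0 := by
  funext q; simp [pdy, fderiv_const]

lemma pdx_iter_zero (a : ℕ) : pdx^[a] (fun _ => (0 : ℝ)) = fun _ => 0 := by
  induction a with
  | zero => rfl
  | succ a ih => rw [Function.iterate_succ_apply, pdx_zero, ih]

lemma pdy_iter_zero (b : ℕ) : pdy^[b] (fun _ => (0 : ℝ)) = fun _ => 0 := by
  induction b with
  | zero => rfl
  | succ b ih => rw [Function.iterate_succ_apply, pdy_zero, ih]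

end Stmt4Aux

open Stmt4Aux in
theorem stmt_4 (N : ℕ) (hN : 1 ≤ N) (f : ℤ → ℝ × ℝ → ℝ)
    (hf : ∀ j : ℤ, 0 ≤ j → j ≤ (N : ℤ) → ContDiff ℝ (⊤ : ℕ∞) (f j))
    (hneg : f (-1) = 0) (htop : f ((N : ℤ) + 1) = 0)
    (hsys : ∀ j : ℤ, 0 ≤ j → j ≤ (N : ℤ) + 1 →
      ∀ q : ℝ × ℝ, pdx (f (j - 1)) q + pdy (f j) q = 0) :
    ∀ j : ℕ, j ≤ N → ∀ a b : ℕ, a + b = N + 1 →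
      ∀ q : ℝ × ℝ, (pdx^[a] (pdy^[b] (f (j : ℤ)))) q = 0 := by
  -- zero functions in `fun _ => 0` form
  have hneg' : f (-1) = fun _ => 0 := by rw [hneg]; rfl
  have htop' : f ((N : ℤ) + 1) = fun _ => 0 := by rw [htop]; rfl
  -- smoothness for all indices in [-1, N+1]
  have hsm : ∀ j : ℤ, -1 ≤ j → j ≤ (N : ℤ) + 1 → ContDiff ℝ (⊤ : ℕ∞) (f j) := by
    intro j h1 h2
    rcases eq_or_lt_of_le h1 with h | h
    · rw [← h, hneg]; exact contDiff_const
    rcases eq_or_lt_of_le h2 with h' | h'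
    · rw [h', htop]; exact contDiff_const
    · exact hf j (by omega) (by omega)
  -- the relation in both directions
  have hxy : ∀ j : ℤ, -1 ≤ j → j ≤ (N : ℤ) →
      pdx (f j) = fun q => -(pdy (f (j + 1)) q) := by
    intro j h1 h2
    funext q
    have := hsys (j + 1) (by omega) (by omega) q
    simp only [add_sub_cancel_right] at this
    linarith
  have hyx : ∀ j : ℤ, 0 ≤ j → j ≤ (N : ℤ) + 1 →
      pdy (f j) = fun q => -(pdx (f (j - 1)) q) := by
    intro j h1 h2
    funext q
    have := hsys j h1 h2 q
    linarith
  -- Lemma B: if we have at least `N+1-j` x-derivatives, the result vanishes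
  have hB : ∀ t : ℕ, ∀ j : ℤ, -1 ≤ j → j + (t : ℤ) = (N : ℤ) + 1 →
      ∀ a b : ℕ, a + b = N + 1 → t ≤ a →
      pdx^[a] (pdy^[b] (f j)) = fun _ => 0 := by
    intro t
    induction t with
    | zero =>
      intro j h1 h2 a b hab hta
      have : j = (N : ℤ) + 1 := by omega
      rw [this, htop', pdy_iter_zero, pdx_iter_zero]
    | succ t ih =>
      intro j h1 h2 a b hab hta
      obtain ⟨a', rfl⟩ : ∃ a', a = a' + 1 := ⟨a - 1, by omega⟩
      rw [Function.iterate_succ_apply,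
        pdx_pdy_iter_comm b (f j) (hsm j h1 (by omega)),
        hxy j h1 (by omega), pdy_iter_neg, pdx_iter_neg]
      have : pdx^[a'] (pdy^[b] (pdy (f (j + 1)))) = fun _ => 0 := by
        rw [← Function.iterate_succ_apply]
        exact ih (j + 1) (by omega) (by omega) a' (b + 1) (by omega) (by omega)
      rw [this]
      funext q; simp
  -- Lemma A: full statement by induction on the number of y-derivatives
  have hA : ∀ b : ℕ, ∀ j : ℤ, -1 ≤ j → j ≤ (N : ℤ) + 1 → ∀ a : ℕ, a + b = N + 1 →
      pdx^[a] (pdy^[b] (f j)) = fun _ => 0 := by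
    intro b
    induction b with
    | zero =>
      intro j h1 h2 a hab
      rcases eq_or_lt_of_le h1 with h | h
      · rw [← h, hneg', pdy_iter_zero, pdx_iter_zero]
      · have h0 : 0 ≤ j := by omega
        refine hB ((N + 1 : ℤ) - j).toNat j h1 (by omega) a 0 hab (by omega)
    | succ b ih =>
      intro j h1 h2 a hab
      rcases eq_or_lt_of_le h1 with h | h
      · rw [← h, hneg', pdy_iter_zero, pdx_iter_zero]
      · rw [Function.iterate_succ_apply, hyx j (by omega) h2, pdy_iter_neg,
          ← pdx_pdy_iter_comm b (f (j - 1)) (hsm (j - 1) (by omega) (by omega)),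
          pdx_iter_neg]
        have hz : pdx^[a] (pdx (pdy^[b] (f (j - 1)))) = fun _ => 0 := by
          rw [← Function.iterate_succ_apply]
          exact ih (j - 1) (by omega) (by omega) (a + 1) (by omega)
        rw [hz]
        funext q; simp
  intro j hj a b hab q
  have := hA b (j : ℤ) (by omega) (by omega) a hab
  exact congrFun this q
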